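/- Let A be an integral Noetherian ring, a₁, ..., a_r a regular sequence in A generating the ideal I = (a₁,...,a_r), and let R = A[X₂, ..., X_r]/J with J generated by a_j − X_j·a₁ for 2 ≤ j ≤ r. For f ∈ A with image f̄ in R and any d ≥ 0: f ∈ I^d if and only if f̄ lies in the ideal generated by ā₁^d, where ā₁ is the image of a₁ in R. -/

import Mathlib

/-!
A regular sequence `a₀, …, a_r` is quasi-regular: a form of degree `n` in the `aᵢ` whose value lies
in `I ^ (n + 1)` has all its coefficients in `I`. This is proved by adjoining one element of the
sequence at a time (Matsumura, *Commutative Ring Theory*, Thm. 16.2), and it yields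
`(I ^ (d + N) : a₀ ^ N) = I ^ d`.

If `f̄ = ḡ ā₀ ^ d` in the chart, evaluating `Xⱼ ↦ aⱼ₊₁ / a₀` in `A[1/a₀]` kills `J`, and clearing
denominators with `a₀ ^ N`, `N = deg g`, gives `f a₀ ^ N = a₀ ^ d G` with `G ∈ I ^ N` in `A`, so
`f ∈ I ^ d`. Conversely `āⱼ₊₁ = X̄ⱼ ā₀` in the chart, so `Ī ⊆ (ā₀)`.
-/

open MvPolynomial

section QuasiRegular

variable {ι A : Type*} [CommRing A]

lemma Finsupp.prod_pow_mem_pow_degree (a : ι → A) {K : Ideal A} (σ : ι →₀ ℕ)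
    (h : ∀ i ∈ σ.support, a i ∈ K) : (σ.prod fun i k => a i ^ k) ∈ K ^ σ.degree := by
  rw [Finsupp.prod, Finsupp.degree_apply, ← Finset.prod_pow_eq_pow_sum]
  exact Ideal.prod_mem_prod fun i hi => Ideal.pow_mem_pow (h i hi) _

variable (A) in
noncomputable def homogeneousSupported (s : Set ι) (n : ℕ) : Submodule A (MvPolynomial ι A) :=
  homogeneousSubmodule ι A n ⊓ Subalgebra.toSubmodule (supported A s)

lemma mem_homogeneousSupported_iff {s : Set ι} {n : ℕ} {F : MvPolynomial ι A} :
    F ∈ homogeneousSupported A s n ↔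
      ∀ σ, F.coeff σ ≠ 0 → σ.degree = n ∧ ↑σ.support ⊆ s := by
  simp only [homogeneousSupported, Submodule.mem_inf, mem_homogeneousSubmodule,
    Subalgebra.mem_toSubmodule, mem_supported, Set.subset_def, Finset.mem_coe,
    mem_vars_iff_mem_support, mem_support_iff]
  have hhom : F.IsHomogeneous n ↔ ∀ σ, F.coeff σ ≠ 0 → σ.degree = n := by
    simp only [MvPolynomial.IsHomogeneous, IsWeightedHomogeneous, Finsupp.degree_eq_weight_one]
    rfl
  rw [hhom]
  exact ⟨fun ⟨h₁, h₂⟩ σ hσ => ⟨h₁ σ hσ, fun i hi => h₂ i ⟨σ, hσ, hi⟩⟩,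
    fun h => ⟨fun σ hσ => (h σ hσ).1, fun i ⟨σ, hσ, hi⟩ => (h σ hσ).2 i hi⟩⟩

lemma monomial_mem_homogeneousSupported {s : Set ι} {σ : ι →₀ ℕ} (hσ : ↑σ.support ⊆ s) (c : A) :
    monomial σ c ∈ homogeneousSupported A s σ.degree := by
  classical
  refine mem_homogeneousSupported_iff.mpr fun τ hτ => ?_
  obtain rfl : σ = τ := by_contra fun h => hτ (by simp [coeff_monomial, h])
  exact ⟨rfl, hσ⟩

lemma mul_mem_homogeneousSupported {s : Set ι} {m n : ℕ} {F G : MvPolynomial ι A}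
    (hF : F ∈ homogeneousSupported A s m) (hG : G ∈ homogeneousSupported A s n) :
    F * G ∈ homogeneousSupported A s (m + n) :=
  ⟨hF.1.mul hG.1, (supported A s).mul_mem hF.2 hG.2⟩

variable (a : ι → A)

lemma aeval_mem_mul_pow {J : Ideal A} {s : Set ι} {n : ℕ} {F : MvPolynomial ι A}
    (hF : F ∈ homogeneousSupported A s n) (hJ : F ∈ Ideal.map C J) :
    aeval a F ∈ J * Ideal.span (a '' s) ^ n := by
  rw [F.as_sum, map_sum]
  refine Ideal.sum_mem _ fun σ hσ => ?_
  obtain ⟨hdeg, hsupp⟩ := mem_homogeneousSupported_iff.mp hF σ (mem_support_iff.mp hσ)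
  rw [aeval_monomial, Algebra.algebraMap_self_apply, ← hdeg]
  exact Ideal.mul_mem_mul (mem_map_C_iff.mp hJ σ)
    (σ.prod_pow_mem_pow_degree a fun i hi => Ideal.subset_span ⟨i, hsupp hi, rfl⟩)

lemma map_aeval_homogeneousSupported (s : Set ι) (n : ℕ) :
    (homogeneousSupported A s n).map (aeval a).toLinearMap = Ideal.span (a '' s) ^ n := by
  refine le_antisymm (Submodule.map_le_iff_le_comap.mpr fun F hF => ?_) ?_
  · simpa using aeval_mem_mul_pow a hF (J := ⊤) (by rw [Ideal.map_top]; trivial)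
  induction n with
  | zero =>
    rw [pow_zero, Ideal.one_eq_top]
    exact fun x _ => ⟨C x, by simpa using monomial_mem_homogeneousSupported (σ := 0) (by simp) x,
      aeval_C _ _⟩
  | succ n ih =>
    have hgen : Ideal.span (a '' s) ≤ (homogeneousSupported A s 1).map (aeval a).toLinearMap := by
      rw [Ideal.span_le]
      rintro _ ⟨i, hi, rfl⟩
      have hX := monomial_mem_homogeneousSupported (σ := Finsupp.single i 1) (c := (1 : A))
        (by simpa using hi)
      rw [Finsupp.degree_single] at hX
      exact ⟨X i, hX, aeval_X _ _⟩
    rw [pow_succ, Submodule.mul_le]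
    intro x hx y hy
    obtain ⟨F, hF, rfl⟩ := ih hx
    obtain ⟨G, hG, rfl⟩ := hgen hy
    exact ⟨F * G, mul_mem_homogeneousSupported hF hG, by simp⟩

lemma aeval_mem_pow {s : Set ι} {n : ℕ} {F : MvPolynomial ι A}
    (hF : F ∈ homogeneousSupported A s n) : aeval a F ∈ Ideal.span (a '' s) ^ n :=
  map_aeval_homogeneousSupported a s n ▸ Submodule.mem_map_of_mem hF

lemma exists_aeval_eq_of_mem_pow {s : Set ι} {n : ℕ} {x : A}
    (hx : x ∈ Ideal.span (a '' s) ^ n) : ∃ F ∈ homogeneousSupported A s n, aeval a F = x := by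
  simpa [← map_aeval_homogeneousSupported] using hx

lemma exists_X_mul_add_of_mem_homogeneousSupported_insert {s : Set ι} {j : ι} {n : ℕ}
    {F : MvPolynomial ι A} (hF : F ∈ homogeneousSupported A (insert j s) (n + 1)) :
    ∃ H ∈ homogeneousSupported A (insert j s) n, ∃ G ∈ homogeneousSupported A s (n + 1),
      F = X j * H + G := by
  classical
  refine ⟨F.divMonomial (Finsupp.single j 1), ?_, F.modMonomial (Finsupp.single j 1), ?_,
    (divMonomial_add_modMonomial_single F j).symm⟩
  · refine mem_homogeneousSupported_iff.mpr fun τ hτ => ?_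
    rw [coeff_divMonomial] at hτ
    obtain ⟨hdeg, hsupp⟩ := mem_homogeneousSupported_iff.mp hF _ hτ
    rw [map_add, Finsupp.degree_single] at hdeg
    exact ⟨by omega, fun i hi => hsupp (Finsupp.support_mono le_add_self hi)⟩
  · refine mem_homogeneousSupported_iff.mpr fun τ hτ => ?_
    have hj : ¬ Finsupp.single j 1 ≤ τ := fun h => hτ (coeff_modMonomial_of_le F h)
    rw [coeff_modMonomial_of_not_le F hj] at hτ
    obtain ⟨hdeg, hsupp⟩ := mem_homogeneousSupported_iff.mp hF _ hτ
    refine ⟨hdeg, fun i hi => (hsupp hi).resolve_left ?_⟩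
    rintro rfl
    exact hj (Finsupp.single_le_iff.mpr
      (Nat.one_le_iff_ne_zero.mpr (Finsupp.mem_support_iff.mp hi)))

lemma mem_map_C_of_isHomogeneous_zero {K : Ideal A} {F : MvPolynomial ι A}
    (hF : F.IsHomogeneous 0) (hFa : aeval a F ∈ K) : F ∈ Ideal.map C K := by
  have hFC : F = C (F.coeff 0) := by
    by_cases h : F = 0
    · simp [h]
    · exact totalDegree_eq_zero_iff_eq_C.mp (hF.totalDegree h)
  rw [hFC] at hFa ⊢
  exact Ideal.mem_map_of_mem _ (by simpa using hFa)

/-- Quasi-regularity of `(a i)_{i ∈ s}` in the sense of Rees: with `I = (a i)_{i ∈ s}`, the graded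
ring `gr_I A` is a polynomial ring over `A ⧸ I` in the images of the `a i`. -/
def IsQuasiRegularOn (s : Set ι) : Prop :=
  ∀ n, ∀ F ∈ homogeneousSupported A s n,
    aeval a F ∈ Ideal.span (a '' s) ^ (n + 1) → F ∈ Ideal.map C (Ideal.span (a '' s))

lemma isQuasiRegularOn_empty : IsQuasiRegularOn a ∅ := by
  intro n F hF hFa
  obtain ⟨c, rfl⟩ := Algebra.mem_bot.mp (supported_empty (R := A) ▸ hF.2)
  simp_all

variable {a}

lemma mem_pow_succ_of_mul_mem_pow {s : Set ι} (hQR : IsQuasiRegularOn a s) {σ : ι →₀ ℕ}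
    (hσ : ↑σ.support ⊆ s) {c : A}
    (hc : ∀ y, y * c ∈ Ideal.span (a '' s) → y ∈ Ideal.span (a '' s))
    {x : A} {i : ℕ} (hx : x ∈ Ideal.span (a '' s) ^ i)
    (hxc : x * aeval a (monomial σ c) ∈ Ideal.span (a '' s) ^ (i + σ.degree + 1)) :
    x ∈ Ideal.span (a '' s) ^ (i + 1) := by
  obtain ⟨G, hG, rfl⟩ := exists_aeval_eq_of_mem_pow a hx
  have hGM : G * monomial σ c ∈ Ideal.map C (Ideal.span (a '' s)) :=
    hQR _ _ (mul_mem_homogeneousSupported hG (monomial_mem_homogeneousSupported hσ c))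
      (by rwa [map_mul])
  have hGI : G ∈ Ideal.map C (Ideal.span (a '' s)) := mem_map_C_iff.mpr fun τ =>
    hc _ (by simpa only [coeff_mul_monomial] using mem_map_C_iff.mp hGM (τ + σ))
  rw [pow_succ']
  exact aeval_mem_mul_pow a hG hGI

lemma mem_pow_of_mul_mem_pow_add {s : Set ι} (hQR : IsQuasiRegularOn a s) {σ : ι →₀ ℕ}
    (hσ : ↑σ.support ⊆ s) {c : A}
    (hc : ∀ y, y * c ∈ Ideal.span (a '' s) → y ∈ Ideal.span (a '' s))
    {x : A} {e : ℕ} (hx : x * aeval a (monomial σ c) ∈ Ideal.span (a '' s) ^ (e + σ.degree)) :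
    x ∈ Ideal.span (a '' s) ^ e := by
  suffices ∀ i ≤ e, x ∈ Ideal.span (a '' s) ^ i from this e le_rfl
  intro i hi
  induction i with
  | zero => simp
  | succ i ih =>
    exact mem_pow_succ_of_mul_mem_pow hQR hσ hc (ih (by omega))
      (Ideal.pow_le_pow_right (by omega) hx)

lemma isQuasiRegularOn_insert {s : Set ι} {j : ι} (hQR : IsQuasiRegularOn a s)
    (hj : ∀ y, a j * y ∈ Ideal.span (a '' s) → y ∈ Ideal.span (a '' s)) :
    IsQuasiRegularOn a (insert j s) := by
  set I := Ideal.span (a '' s)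
  set I' := Ideal.span (a '' insert j s)
  have hII' : I ≤ I' := Ideal.span_mono (Set.image_mono (Set.subset_insert j s))
  have hjI' : a j ∈ I' := Ideal.subset_span ⟨j, Set.mem_insert j s, rfl⟩
  have hcolon : ∀ n x, a j * x ∈ I ^ n → x ∈ I ^ n := fun n x h =>
    mem_pow_of_mul_mem_pow_add hQR (σ := 0) (by simp) (fun y hy => hj y (by rwa [mul_comm]))
      (by simpa [mul_comm] using h)
  intro n
  induction n with
  | zero => exact fun F hF hFa => mem_map_C_of_isHomogeneous_zero a hF.1 (by simpa using hFa)
  | succ n ih =>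
    intro F hF hFa
    obtain ⟨H, hH, G, hG, rfl⟩ := exists_X_mul_add_of_mem_homogeneousSupported_insert hF
    obtain ⟨P, hP, hPa⟩ := exists_aeval_eq_of_mem_pow a hFa
    obtain ⟨P₁, hP₁, P₀, hP₀, rfl⟩ := exists_X_mul_add_of_mem_homogeneousSupported_insert hP
    simp only [map_add, map_mul, aeval_X] at hPa
    have hD : aeval a H - aeval a P₁ ∈ I ^ (n + 1) := by
      refine hcolon _ _ ?_
      rw [show a j * (aeval a H - aeval a P₁) = aeval a P₀ - aeval a G by linear_combination -hPa]
      exact sub_mem (Ideal.pow_le_pow_right (Nat.le_succ _) (aeval_mem_pow a hP₀))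
        (aeval_mem_pow a hG)
    obtain ⟨K, hK, hKa⟩ := exists_aeval_eq_of_mem_pow a hD
    have hH' : H ∈ Ideal.map C I' := by
      refine ih H hH ?_
      rw [show aeval a H = aeval a P₁ + (aeval a H - aeval a P₁) by ring]
      exact add_mem (aeval_mem_pow a hP₁) (Ideal.pow_right_mono hII' _ hD)
    have hGK : G + C (a j) * K ∈ Ideal.map C I := by
      refine hQR _ _ (add_mem hG (by simpa [C_mul'] using Submodule.smul_mem _ (a j) hK)) ?_
      rw [map_add, map_mul, aeval_C, Algebra.algebraMap_self_apply, hKa,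
        show aeval a G + a j * (aeval a H - aeval a P₁) = aeval a P₀ by linear_combination -hPa]
      exact aeval_mem_pow a hP₀
    have hG' : G ∈ Ideal.map C I' := by
      rw [show G = (G + C (a j) * K) - C (a j) * K by ring]
      exact sub_mem (Ideal.map_mono hII' hGK)
        (Ideal.mul_mem_right _ _ (Ideal.mem_map_of_mem C hjI'))
    exact add_mem (Ideal.mul_mem_left _ _ hH') hG'

lemma mem_pow_of_mul_pow_mem_pow_add (hQR : IsQuasiRegularOn a Set.univ) (j : ι) {x : A}
    {d N : ℕ} (hx : x * a j ^ N ∈ Ideal.span (Set.range a) ^ (d + N)) :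
    x ∈ Ideal.span (Set.range a) ^ d := by
  rw [← Set.image_univ] at hx ⊢
  exact mem_pow_of_mul_mem_pow_add hQR (σ := Finsupp.single j N) (c := 1) (by simp) (by simp)
    (by simpa [aeval_monomial, Finsupp.prod_single_index] using hx)

end QuasiRegular

lemma Ideal.ofList_take_ofFn {A : Type*} [CommRing A] {m : ℕ} (a : Fin m → A) (k : ℕ) :
    Ideal.ofList ((List.ofFn a).take k) = Ideal.span (a '' {i | (i : ℕ) < k}) := by
  rw [Ideal.ofList]
  congr 1
  ext x
  simp only [List.mem_take_iff_getElem, List.getElem_ofFn, List.length_ofFn, lt_inf_iff,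
    Set.mem_ofPred_eq, Set.mem_image]
  exact ⟨fun ⟨j, ⟨hjk, hjm⟩, h⟩ => ⟨⟨j, hjm⟩, hjk, h⟩,
    fun ⟨i, hik, h⟩ => ⟨i, ⟨hik, i.isLt⟩, h⟩⟩

theorem isQuasiRegularOn_univ_of_isWeaklyRegular {A : Type*} [CommRing A] {m : ℕ}
    {a : Fin m → A} (ha : RingTheory.Sequence.IsWeaklyRegular A (List.ofFn a)) :
    IsQuasiRegularOn a Set.univ := by
  suffices ∀ k ≤ m, IsQuasiRegularOn a {i | (i : ℕ) < k} by simpa using this m le_rfl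
  intro k hk
  induction k with
  | zero => simpa using isQuasiRegularOn_empty a
  | succ k ih =>
    have hins : {i : Fin m | (i : ℕ) < k + 1} = insert ⟨k, hk⟩ {i : Fin m | (i : ℕ) < k} := by
      ext i
      simp only [Set.mem_insert_iff, Set.mem_ofPred_eq, Fin.ext_iff]
      omega
    rw [hins]
    refine isQuasiRegularOn_insert (ih (by omega)) fun y hy => ?_
    have hreg := ha.regular_mod_prev k (by simpa using hk)
    rw [List.getElem_ofFn, Ideal.ofList_take_ofFn, Ideal.smul_eq_mul, Ideal.mul_top] at hreg
    exact mem_of_isSMulRegular_quotient_of_smul_mem hreg hy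

section BlowupChart

variable {A : Type*} [CommRing A] {r : ℕ} (a : Fin (r + 1) → A)

noncomputable def blowupChartIdeal : Ideal (MvPolynomial (Fin r) A) :=
  Ideal.span (Set.range fun j : Fin r => C (a j.succ) - X j * C (a 0))

lemma mk_C_mem_span_pow_of_mem_pow {f : A} {d : ℕ} (hf : f ∈ Ideal.span (Set.range a) ^ d) :
    Ideal.Quotient.mk (blowupChartIdeal a) (C f) ∈
      Ideal.span {Ideal.Quotient.mk (blowupChartIdeal a) (C (a 0)) ^ d} := by
  set φ := (Ideal.Quotient.mk (blowupChartIdeal a)).comp C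
  have hgen : Ideal.map φ (Ideal.span (Set.range a)) ≤ Ideal.span {φ (a 0)} := by
    rw [Ideal.map_span, Ideal.span_le]
    rintro _ ⟨_, ⟨i, rfl⟩, rfl⟩
    induction i using Fin.cases with
    | zero => exact Ideal.mem_span_singleton_self _
    | succ j =>
      have hj : φ (a j.succ) = Ideal.Quotient.mk _ (X j) * φ (a 0) := by
        simp only [φ, RingHom.comp_apply, ← map_mul]
        exact Ideal.Quotient.eq.mpr (Ideal.subset_span (Set.mem_range_self j))
      rw [SetLike.mem_coe, hj]
      exact Ideal.mul_mem_left _ _ (Ideal.mem_span_singleton_self _)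
  rw [← Ideal.span_singleton_pow]
  exact Ideal.pow_right_mono hgen d (Ideal.map_pow φ _ d ▸ Ideal.mem_map_of_mem φ hf)

variable {B : Type*} [CommRing B] [Algebra A B] {α : Fin r → B}

lemma blowupChartIdeal_le_ker_aeval
    (hα : ∀ j, algebraMap A B (a 0) * α j = algebraMap A B (a j.succ)) :
    blowupChartIdeal a ≤ RingHom.ker (aeval α) := by
  rw [blowupChartIdeal, Ideal.span_le]
  rintro _ ⟨j, rfl⟩
  simp [← hα, mul_comm]

lemma algebraMap_prod_pow_succ
    (hα : ∀ j, algebraMap A B (a 0) * α j = algebraMap A B (a j.succ)) (σ : Fin r →₀ ℕ) :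
    algebraMap A B (σ.prod fun j k => a j.succ ^ k) =
      algebraMap A B (a 0) ^ σ.degree * σ.prod fun j k => α j ^ k := by
  simp only [Finsupp.prod, map_prod, map_pow, ← hα, mul_pow, Finset.prod_mul_distrib,
    Finset.prod_pow_eq_pow_sum, Finsupp.degree_apply]

lemma exists_mem_pow_algebraMap_eq_pow_mul_aeval
    (hα : ∀ j, algebraMap A B (a 0) * α j = algebraMap A B (a j.succ))
    (g : MvPolynomial (Fin r) A) :
    ∃ G ∈ Ideal.span (Set.range a) ^ g.totalDegree,
      algebraMap A B G = algebraMap A B (a 0) ^ g.totalDegree * aeval α g := by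
  set N := g.totalDegree
  have hdeg : ∀ σ ∈ g.support, σ.degree ≤ N := fun σ hσ => le_totalDegree hσ
  refine ⟨∑ σ ∈ g.support, g.coeff σ * (a 0 ^ (N - σ.degree) * σ.prod fun j k => a j.succ ^ k),
    Ideal.sum_mem _ fun σ hσ => Ideal.mul_mem_left _ _ ?_, ?_⟩
  · have ha : ∀ i, a i ∈ Ideal.span (Set.range a) := fun i => Ideal.subset_span ⟨i, rfl⟩
    have := Ideal.mul_mem_mul (Ideal.pow_mem_pow (ha 0) (N - σ.degree))
      (σ.prod_pow_mem_pow_degree (fun j => a j.succ) fun j _ => ha j.succ)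
    rwa [← pow_add, Nat.sub_add_cancel (hdeg σ hσ)] at this
  · conv_rhs => rw [g.as_sum]
    rw [map_sum, map_sum, Finset.mul_sum]
    refine Finset.sum_congr rfl fun σ hσ => ?_
    rw [aeval_monomial, map_mul, map_mul, map_pow, algebraMap_prod_pow_succ a hα,
      ← pow_sub_mul_pow _ (hdeg σ hσ)]
    ring

lemma exists_mul_pow_eq_pow_mul_of_C_sub_mem (h0 : a 0 ∈ nonZeroDivisors A) {f : A} {d : ℕ}
    {g : MvPolynomial (Fin r) A} (hg : C f - g * C (a 0) ^ d ∈ blowupChartIdeal a) :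
    ∃ G ∈ Ideal.span (Set.range a) ^ g.totalDegree, f * a 0 ^ g.totalDegree = a 0 ^ d * G := by
  let B := Localization.Away (a 0)
  let α : Fin r → B := fun j => algebraMap A B (a j.succ) * IsLocalization.Away.invSelf (a 0)
  have hα : ∀ j, algebraMap A B (a 0) * α j = algebraMap A B (a j.succ) := fun j => by
    rw [mul_left_comm, IsLocalization.Away.mul_invSelf, mul_one]
  have hinj : Function.Injective (algebraMap A B) :=
    IsLocalization.injective B (Submonoid.powers_le.mpr h0)
  have hf : algebraMap A B f = aeval α g * algebraMap A B (a 0) ^ d := by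
    simpa [sub_eq_zero] using blowupChartIdeal_le_ker_aeval a hα hg
  obtain ⟨G, hG, hGα⟩ := exists_mem_pow_algebraMap_eq_pow_mul_aeval a hα g
  refine ⟨G, hG, hinj ?_⟩
  rw [map_mul, map_mul, map_pow, map_pow, hf, hGα]
  ring

lemma mem_pow_of_mk_C_mem_span_pow (ha : RingTheory.Sequence.IsWeaklyRegular A (List.ofFn a))
    {f : A} {d : ℕ} (h : Ideal.Quotient.mk (blowupChartIdeal a) (C f) ∈
      Ideal.span {Ideal.Quotient.mk (blowupChartIdeal a) (C (a 0)) ^ d}) :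
    f ∈ Ideal.span (Set.range a) ^ d := by
  obtain ⟨z, hz⟩ := Ideal.mem_span_singleton'.mp h
  obtain ⟨g, rfl⟩ := Ideal.Quotient.mk_surjective z
  have hg : C f - g * C (a 0) ^ d ∈ blowupChartIdeal a := by
    rw [← Ideal.Quotient.eq, map_mul, map_pow, hz]
  have h0 : a 0 ∈ nonZeroDivisors A := by
    have hreg := ((RingTheory.Sequence.isWeaklyRegular_cons_iff A _ _).mp
      (List.ofFn_succ ▸ ha)).1
    exact mem_nonZeroDivisors_iff_right.mpr fun x hx =>
      hreg (by simpa [mul_comm] using hx : a 0 • x = a 0 • 0)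
  obtain ⟨G, hG, hfG⟩ := exists_mul_pow_eq_pow_mul_of_C_sub_mem a h0 hg
  refine mem_pow_of_mul_pow_mem_pow_add (isQuasiRegularOn_univ_of_isWeaklyRegular ha) 0
    (N := g.totalDegree) ?_
  rw [hfG, pow_add]
  exact Ideal.mul_mem_mul (Ideal.pow_mem_pow (Ideal.subset_span (Set.mem_range_self 0)) d) hG

end BlowupChart

theorem mem_pow_iff_image_mem_span_pow_general (A : Type*) [CommRing A] (r : ℕ) (a : Fin (r + 1) → A)
    (ha : RingTheory.Sequence.IsRegular A (List.ofFn a))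
    (I : Ideal A) (hI : I = Ideal.span (Set.range a))
    (J : Ideal (MvPolynomial (Fin r) A))
    (hJ : J = Ideal.span (Set.range fun j : Fin r => C (a j.succ) - X j * C (a 0)))
    (f : A) (d : ℕ) :
    f ∈ I ^ d ↔
      Ideal.Quotient.mk J (C f) ∈
        Ideal.span {(Ideal.Quotient.mk J (C (a 0))) ^ d} := by
  subst hI hJ
  exact ⟨mk_C_mem_span_pow_of_mem_pow a, mem_pow_of_mk_C_mem_span_pow a ha.toIsWeaklyRegular⟩

/-- Let `A` be an integral Noetherian ring, `a₀, a₁, …, a_r` a regular sequence in `A`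
generating the ideal `I = (a₀, …, a_r)`, and let `R = A[X₁, …, X_r]/J` with `J`
generated by `a_j − X_j·a₀` for `1 ≤ j ≤ r` (the affine blow-up chart). For `f ∈ A`
with image `f̄` in `R` and any `d ≥ 0`: `f ∈ I^d` if and only if `f̄` lies in the ideal
generated by `ā₀^d`, where `ā₀` is the image of `a₀` in `R`. -/
theorem mem_pow_iff_image_mem_span_pow (A : Type*) [CommRing A] [IsDomain A]
    [IsNoetherianRing A] (r : ℕ) (a : Fin (r + 1) → A)
    (ha : RingTheory.Sequence.IsRegular A (List.ofFn a))
    (I : Ideal A) (hI : I = Ideal.span (Set.range a))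
    (J : Ideal (MvPolynomial (Fin r) A))
    (hJ : J = Ideal.span (Set.range fun j : Fin r => C (a j.succ) - X j * C (a 0)))
    (f : A) (d : ℕ) :
    f ∈ I ^ d ↔
      Ideal.Quotient.mk J (C f) ∈
        Ideal.span {(Ideal.Quotient.mk J (C (a 0))) ^ d} :=
  mem_pow_iff_image_mem_span_pow_general A r a ha I hI J hJ f d
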